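/- (Theorem 4.1, first case) Let p be an odd prime, G a finite group, G' ≤ G a subgroup of index 2p^2, and λ : G → Equiv.Perm (G ⧸ G') the action by left translation on left cosets. If there exists a regular subgroup of Equiv.Perm (G ⧸ G') isomorphic to ZMod p × ZMod (2p) that is normalized by λ(G), then there exists a regular subgroup of Equiv.Perm (G ⧸ G') isomorphic to the generalized dihedral group (C_p × C_p) ⋊ C_2 that is normalized by λ(G). -/

import Mathlib

/-- The holomorph of a group `X`: the normalizer in `Equiv.Perm X` of the image of the
left regular representation of `X`. -/
def Hol (X : Type*) [Group X] : Subgroup (Equiv.Perm X) :=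
  Subgroup.normalizer ((MulAction.toPermHom X X).range : Set (Equiv.Perm X))

/-- A subgroup `S` of `Equiv.Perm X` acts regularly on `X`: the action is transitive and
the stabilizer of every point is trivial. -/
def IsRegularSubgroup {X : Type*} (S : Subgroup (Equiv.Perm X)) : Prop :=
  (∀ x y : X, ∃ s ∈ S, s x = y) ∧ ∀ s ∈ S, ∀ x : X, s x = x → s = 1

/-- The inversion automorphism of `C_p × C_p` (written multiplicatively). -/
def invAut (p : ℕ) : MulAut (Multiplicative (ZMod p × ZMod p)) :=
  MulEquiv.inv (Multiplicative (ZMod p × ZMod p))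

/-- The action of `C_2` on `C_p × C_p` by inversion. -/
def invHom (p : ℕ) : Multiplicative (ZMod 2) →* MulAut (Multiplicative (ZMod p × ZMod p)) where
  toFun g := invAut p ^ (Multiplicative.toAdd g).val
  map_one' := by simp
  map_mul' g h := by
    have h2 : invAut p ^ 2 = 1 := by
      refine MulEquiv.ext fun x => ?_
      rw [sq, MulAut.mul_apply]
      exact inv_inv x
    show invAut p ^ (Multiplicative.toAdd (g * h)).val = _
    rw [toAdd_mul, ZMod.val_add, ← pow_add]
    exact (pow_eq_pow_mod _ h2).symm

/-- The generalized dihedral group `(C_p × C_p) ⋊ C_2`: the semidirect product of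
`C_p × C_p` (written multiplicatively) by the group of order 2 acting by inversion. -/
abbrev GenDihedral (p : ℕ) : Type :=
  SemidirectProduct (Multiplicative (ZMod p × ZMod p)) (Multiplicative (ZMod 2)) (invHom p)

/-!
Fix a base point `x₀` and identify `X = G ⧸ G'` with `N` through `a ↦ a x₀`; let `σ` be the
inversion of `N` transported to `X`. As `N ≅ C_p × C_{2p}` is abelian, conjugation by `σ` inverts
`N`. Let `t` be the unique involution of `N` and `N[p] ≅ C_p × C_p` its `p`-torsion. Then
`s = t σ` is an involution inverting `N`, so `M = N[p] ⋊ ⟨s⟩` is generalized dihedral.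
`M` is regular: `N[p] x₀` and `N[p] s x₀ = N[p] t x₀` exhaust `X`, and if `a s` (`a ∈ N[p]`)
fixed `b x₀` then `a t = b²` would lie in `N[p]`. Finally, a permutation `c` normalizing `N` is
`b α` with `b ∈ N` and `α` an automorphism of `N` fixing `x₀`; `α` commutes with `σ` and fixes
`t`, so `c s c⁻¹ = b² s ∈ M`. Hence everything normalizing `N`, in particular `λ(G)`,
normalizes `M`.
-/

namespace ZMod

theorem natCast_mul_eq_zero_iff {n : ℕ} [NeZero n] (k : ℕ) (w : ZMod n) :
    (k : ZMod n) * w = 0 ↔ n ∣ k * w.val := by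
  rw [← natCast_eq_zero_iff, Nat.cast_mul, natCast_zmod_val]

variable (p : ℕ)

@[simp]
theorem two_mul_natCast_self : (2 : ZMod (2 * p)) * p = 0 := by
  exact_mod_cast natCast_self (2 * p)

def doublingHom : ZMod p →+ ZMod (2 * p) :=
  lift p ⟨(AddMonoidHom.mulLeft 2).comp (Int.castAddHom _), by simp⟩

variable {p}

theorem doublingHom_intCast (n : ℤ) : doublingHom p n = 2 * n :=
  lift_coe p _ n

theorem doublingHom_natCast (n : ℕ) : doublingHom p n = 2 * n := by
  simpa using doublingHom_intCast (p := p) n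

theorem doublingHom_injective (hp : p ≠ 0) : Function.Injective (doublingHom p) := by
  have : NeZero p := ⟨hp⟩
  refine (injective_iff_map_eq_zero _).mpr fun v hv => ?_
  rw [← natCast_zmod_val v, doublingHom_natCast] at hv
  have : ((2 * v.val : ℕ) : ZMod (2 * p)) = 0 := by exact_mod_cast hv
  rw [natCast_eq_zero_iff, Nat.mul_dvd_mul_iff_left two_pos] at this
  rw [← natCast_zmod_val v, natCast_eq_zero_iff]
  exact this

theorem exists_doublingHom_eq (hp : p ≠ 0) {w : ZMod (2 * p)} (hw : p * w = 0) :
    ∃ v, doublingHom p v = w := by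
  have : NeZero (2 * p) := ⟨by omega⟩
  have h := (dvd_of_eq (Nat.mul_comm p 2)).trans ((natCast_mul_eq_zero_iff p w).mp hw)
  obtain ⟨k, hk⟩ := (Nat.mul_dvd_mul_iff_left (Nat.pos_of_ne_zero hp)).mp h
  refine ⟨k, ?_⟩
  rw [doublingHom_natCast, ← natCast_zmod_val w, hk, Nat.cast_mul, Nat.cast_ofNat]

theorem eq_zero_or_eq_of_two_mul_eq_zero (hp : p ≠ 0) {w : ZMod (2 * p)} (hw : 2 * w = 0) :
    w = 0 ∨ w = p := by
  have : NeZero (2 * p) := ⟨by omega⟩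
  have h := (natCast_mul_eq_zero_iff 2 w).mp (by exact_mod_cast hw)
  obtain ⟨k, hk⟩ := (Nat.mul_dvd_mul_iff_left two_pos).mp h
  have hk2 : k < 2 := by
    have := val_lt w
    rw [hk] at this
    exact Nat.lt_of_mul_lt_mul_left (by omega : p * k < p * 2)
  rw [← natCast_zmod_val w, hk]
  interval_cases k <;> simp

theorem eq_zero_of_two_mul_eq_zero (hodd : Odd p) {u : ZMod p} (hu : 2 * u = 0) : u = 0 := by
  have h2 : IsUnit (2 : ZMod p) := by
    simpa using (isUnit_iff_coprime 2 p).mpr (Nat.coprime_two_left.mpr hodd)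
  exact h2.mul_right_eq_zero.mp hu

end ZMod

namespace CpTimesC2p

variable {p : ℕ} {H : Type*} [Group H] (e : H ≃* Multiplicative (ZMod p × ZMod (2 * p)))

def involution : H := e.symm (.ofAdd (0, p))

def torsionHom : Multiplicative (ZMod p × ZMod p) →* H :=
  e.symm.toMonoidHom.comp
    (AddMonoidHom.toMultiplicative ((AddMonoidHom.id _).prodMap (ZMod.doublingHom p)))

include e in
theorem commute (a b : H) : Commute a b :=
  e.injective (by rw [map_mul, map_mul]; exact mul_comm _ _)

include e in
theorem pow_two_mul_eq_one (a : H) : a ^ (2 * p) = 1 := by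
  refine e.injective (Multiplicative.toAdd.injective ?_)
  rw [map_pow, toAdd_pow, map_one, toAdd_one]
  ext
  · simp [mul_comm 2 p]
  · simp [nsmul_eq_mul]

theorem involution_sq : involution e ^ 2 = 1 := by
  refine e.injective (Multiplicative.toAdd.injective ?_)
  rw [involution, map_pow, e.apply_symm_apply, toAdd_pow, map_one, toAdd_one]
  ext <;> simp

theorem involution_ne_one (hp : p ≠ 0) : involution e ≠ 1 := by
  have : NeZero (2 * p) := ⟨by omega⟩
  rw [involution, Ne, e.symm_apply_eq, map_one]
  intro h
  have := congrArg Prod.snd (congrArg Multiplicative.toAdd h)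
  rw [toAdd_ofAdd, toAdd_one, Prod.snd_zero, ZMod.natCast_eq_zero_iff] at this
  exact absurd (Nat.le_of_dvd (Nat.pos_of_ne_zero hp) this) (by omega)

theorem eq_one_or_eq_involution (hodd : Odd p) {a : H} (ha : a ^ 2 = 1) :
    a = 1 ∨ a = involution e := by
  have h2 : 2 • Multiplicative.toAdd (e a) = 0 := by
    rw [← toAdd_pow, ← map_pow, ha, map_one, toAdd_one]
  have h1 : (Multiplicative.toAdd (e a)).1 = 0 :=
    ZMod.eq_zero_of_two_mul_eq_zero hodd (by simpa using congrArg Prod.fst h2)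
  rcases ZMod.eq_zero_or_eq_of_two_mul_eq_zero hodd.pos.ne' (by simpa using congrArg Prod.snd h2)
    with h | h
  · left
    exact e.injective (Multiplicative.toAdd.injective (by rw [map_one]; exact Prod.ext h1 h))
  · right
    rw [involution, e.eq_symm_apply]
    exact Multiplicative.toAdd.injective (Prod.ext h1 h)

theorem involution_pow (hodd : Odd p) : involution e ^ p = involution e := by
  obtain ⟨k, rfl⟩ := hodd
  rw [pow_succ, pow_mul, involution_sq, one_pow, one_mul]

theorem pow_eq_one_or_eq_involution (hodd : Odd p) (a : H) :
    a ^ p = 1 ∨ a ^ p = involution e :=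
  eq_one_or_eq_involution e hodd (by rw [← pow_mul, mul_comm, pow_two_mul_eq_one e])

theorem torsionHom_injective (hp : p ≠ 0) : Function.Injective (torsionHom e) :=
  e.symm.injective.comp
    (Multiplicative.ofAdd.injective.comp (Function.injective_id.prodMap
      (ZMod.doublingHom_injective hp)) |>.comp Multiplicative.toAdd.injective)

theorem torsionHom_pow (n : Multiplicative (ZMod p × ZMod p)) : torsionHom e n ^ p = 1 := by
  rw [← map_pow]
  convert map_one (torsionHom e)
  refine Multiplicative.toAdd.injective ?_
  ext <;> simp

theorem exists_torsionHom_eq (hp : p ≠ 0) {a : H} (ha : a ^ p = 1) :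
    ∃ n, torsionHom e n = a := by
  have hp' : p • Multiplicative.toAdd (e a) = 0 := by
    rw [← toAdd_pow, ← map_pow, ha, map_one, toAdd_one]
  obtain ⟨v, hv⟩ := ZMod.exists_doublingHom_eq hp (by simpa using congrArg Prod.snd hp')
  refine ⟨.ofAdd ((Multiplicative.toAdd (e a)).1, v), ?_⟩
  rw [← e.symm_apply_apply a, torsionHom]
  simp [hv]

theorem pow_eq_one_or_mul_involution_pow_eq_one (hodd : Odd p) (a : H) :
    a ^ p = 1 ∨ (a * involution e) ^ p = 1 := by
  refine (pow_eq_one_or_eq_involution e hodd a).imp_right fun ha => ?_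
  rw [(commute e _ _).mul_pow, ha, involution_pow e hodd, ← sq, involution_sq]

theorem mul_involution_ne_sq (hodd : Odd p) {a : H} (ha : a ^ p = 1) (b : H) :
    a * involution e ≠ b ^ 2 := by
  intro h
  apply involution_ne_one e hodd.pos.ne'
  rw [← involution_pow e hodd, eq_inv_mul_of_mul_eq h, (commute e _ _).mul_pow, inv_pow, ha,
    ← pow_mul, pow_two_mul_eq_one e, inv_one, one_mul]

theorem map_involution (hodd : Odd p) (φ : H ≃* H) : φ (involution e) = involution e :=
  (eq_one_or_eq_involution e hodd (by rw [← map_pow, involution_sq, map_one])).resolve_left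
    fun h => involution_ne_one e hodd.pos.ne' (φ.injective (h.trans (map_one φ).symm))

end CpTimesC2p

open Equiv

theorem Multiplicative.eq_one_or_eq_ofAdd_one (g : Multiplicative (ZMod 2)) :
    g = 1 ∨ g = .ofAdd 1 := by
  revert g
  decide

theorem invHom_ofAdd_one_apply (p : ℕ) (n : Multiplicative (ZMod p × ZMod p)) :
    invHom p (.ofAdd 1) n = n⁻¹ := by
  change (invAut p ^ 1) n = n⁻¹
  rw [pow_one]
  rfl

def involutionHom {G : Type*} [Group G] (s : G) (hs : s * s = 1) :
    Multiplicative (ZMod 2) →* G where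
  toFun g := s ^ (Multiplicative.toAdd g).val
  map_one' := by simp
  map_mul' g h := by
    rw [toAdd_mul, ZMod.val_add, ← pow_add]
    exact (pow_eq_pow_mod _ (by rw [sq, hs])).symm

@[simp]
theorem involutionHom_ofAdd_one {G : Type*} [Group G] (s : G) (hs : s * s = 1) :
    involutionHom s hs (.ofAdd 1) = s :=
  pow_one s

theorem Subgroup.apply_smul_eq_normalizerMonoidHom_smul {X : Type*} {N : Subgroup (Perm X)}
    (d : normalizer (N : Set (Perm X))) (a : N) (x : X) :
    (d : Perm X) (a • x) = N.normalizerMonoidHom d a • (d : Perm X) x := by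
  simp [Subgroup.smul_def, Perm.smul_def, Perm.mul_apply]

namespace IsRegularSubgroup

variable {X : Type*} {N : Subgroup (Perm X)} (hN : IsRegularSubgroup N) (x₀ : X)

include hN in
theorem smul_left_injective : Function.Injective fun a : N => a • x₀ := by
  intro a b (h : a • x₀ = b • x₀)
  have hfix : ((b⁻¹ * a : N) : Perm X) x₀ = x₀ := by
    change (b⁻¹ * a) • x₀ = x₀
    rw [mul_smul, h, inv_smul_smul]
  exact (inv_mul_eq_one.mp (Subtype.ext (hN.2 _ (b⁻¹ * a).2 x₀ hfix))).symm

noncomputable def orbitEquiv : N ≃ X :=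
  .ofBijective (· • x₀)
    ⟨hN.smul_left_injective x₀, fun x =>
      let ⟨s, hs, hsx⟩ := hN.1 x₀ x
      ⟨⟨s, hs⟩, hsx⟩⟩

@[simp]
theorem orbitEquiv_apply (a : N) : hN.orbitEquiv x₀ a = a • x₀ := rfl

noncomputable def invPerm : Perm X := (hN.orbitEquiv x₀).permCongr (Equiv.inv N)

theorem invPerm_smul (a : N) : hN.invPerm x₀ (a • x₀) = a⁻¹ • x₀ := by
  rw [invPerm, permCongr_apply, ← orbitEquiv_apply hN x₀ a, symm_apply_apply]
  rfl

theorem invPerm_mul_self : hN.invPerm x₀ * hN.invPerm x₀ = 1 := by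
  ext x
  obtain ⟨a, rfl⟩ := (hN.orbitEquiv x₀).surjective x
  simp [Perm.mul_apply, invPerm_smul]

theorem invPerm_mul_mul_invPerm [IsMulCommutative N] (a : N) :
    hN.invPerm x₀ * a * hN.invPerm x₀ = ((a⁻¹ : N) : Perm X) := by
  ext x
  obtain ⟨b, rfl⟩ := (hN.orbitEquiv x₀).surjective x
  change hN.invPerm x₀ (a • hN.invPerm x₀ (b • x₀)) = a⁻¹ • b • x₀
  rw [invPerm_smul, ← mul_smul, invPerm_smul, mul_inv_rev, inv_inv, mul_comm' b, mul_smul]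

/-- A permutation normalizing `N` and fixing the base point acts on `N ≃ X` as an automorphism,
and automorphisms commute with inversion. -/
theorem commute_invPerm_of_apply_self {d : Perm X}
    (hd : d ∈ Subgroup.normalizer (N : Set (Perm X))) (hd₀ : d x₀ = x₀) :
    Commute d (hN.invPerm x₀) := by
  ext x
  obtain ⟨a, rfl⟩ := (hN.orbitEquiv x₀).surjective x
  have hd' := Subgroup.apply_smul_eq_normalizerMonoidHom_smul (N := N) ⟨d, hd⟩
  simp only [Perm.mul_apply, orbitEquiv_apply, invPerm_smul, hd', hd₀, map_inv]

theorem exists_conj_invPerm_eq [IsMulCommutative N] {c : Perm X}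
    (hc : c ∈ Subgroup.normalizer (N : Set (Perm X))) :
    ∃ b : N, c * hN.invPerm x₀ * c⁻¹ = ((b ^ 2 : N) : Perm X) * hN.invPerm x₀ := by
  obtain ⟨b, hbx⟩ := (hN.orbitEquiv x₀).surjective (c x₀)
  refine ⟨b, ?_⟩
  obtain ⟨d, rfl⟩ : ∃ d, c = b * d := ⟨(b : Perm X)⁻¹ * c, (mul_inv_cancel_left _ _).symm⟩
  have hd : d ∈ Subgroup.normalizer (N : Set (Perm X)) := by
    simpa using mul_mem (inv_mem (Subgroup.le_normalizer b.2)) hc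
  have hd₀ : d x₀ = x₀ := (b : Perm X).injective hbx.symm
  set σ := hN.invPerm x₀
  have hσ : σ * σ = 1 := hN.invPerm_mul_self x₀
  calc b * d * σ * (b * d)⁻¹ = b * (d * σ * d⁻¹) * (b : Perm X)⁻¹ := by group
    _ = b * σ * (b : Perm X)⁻¹ := by
        rw [(hN.commute_invPerm_of_apply_self x₀ hd hd₀).eq, mul_inv_cancel_right]
    _ = b * (σ * ((b⁻¹ : N) : Perm X) * σ) * σ := by
        simp only [Subgroup.coe_inv, mul_assoc, hσ, mul_one]
    _ = ((b ^ 2 : N) : Perm X) * σ := by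
        rw [hN.invPerm_mul_mul_invPerm, inv_inv, pow_two, Subgroup.coe_mul]


section Construction

open CpTimesC2p

variable {p : ℕ} (e : N ≃* Multiplicative (ZMod p × ZMod (2 * p)))

noncomputable def reflection : Perm X := ((involution e : N) : Perm X) * hN.invPerm x₀

theorem reflection_mul_mul_reflection (a : N) :
    hN.reflection x₀ e * a * hN.reflection x₀ e = ((a⁻¹ : N) : Perm X) := by
  have : IsMulCommutative N := .of_comm (commute e)
  calc hN.reflection x₀ e * a * hN.reflection x₀ e
      = (involution e : N) *
          (hN.invPerm x₀ * ((a * involution e : N) : Perm X) * hN.invPerm x₀) := by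
        simp only [reflection, Subgroup.coe_mul, mul_assoc]
    _ = ((involution e * (a * involution e)⁻¹ : N) : Perm X) := by
        rw [invPerm_mul_mul_invPerm, Subgroup.coe_mul]
    _ = ((a⁻¹ : N) : Perm X) := by rw [mul_inv_rev, mul_inv_cancel_left]

theorem reflection_mul_self : hN.reflection x₀ e * hN.reflection x₀ e = 1 := by
  simpa using hN.reflection_mul_mul_reflection x₀ e 1

theorem reflection_smul (b : N) :
    hN.reflection x₀ e (b • x₀) = (involution e * b⁻¹) • x₀ := by
  rw [reflection, Perm.mul_apply, invPerm_smul, mul_smul]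
  rfl

noncomputable def genDihedralHom : GenDihedral p →* Perm X :=
  SemidirectProduct.lift (N.subtype.comp (torsionHom e))
    (involutionHom _ (hN.reflection_mul_self x₀ e)) fun g => by
      rcases Multiplicative.eq_one_or_eq_ofAdd_one g with rfl | rfl
      · refine MonoidHom.ext fun n => ?_
        simp
      · refine MonoidHom.ext fun n => ?_
        simp [invHom_ofAdd_one_apply, ← hN.reflection_mul_mul_reflection x₀ e,
          inv_eq_of_mul_eq_one_right (hN.reflection_mul_self x₀ e)]

@[simp]
theorem genDihedralHom_inl (n : Multiplicative (ZMod p × ZMod p)) :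
    hN.genDihedralHom x₀ e (.inl n) = torsionHom e n :=
  SemidirectProduct.lift_inl ..

@[simp]
theorem genDihedralHom_inr_ofAdd_one :
    hN.genDihedralHom x₀ e (.inr (.ofAdd 1)) = hN.reflection x₀ e :=
  (SemidirectProduct.lift_inr ..).trans (involutionHom_ofAdd_one ..)

noncomputable def genDihedral : Subgroup (Perm X) := (hN.genDihedralHom x₀ e).range

theorem mem_genDihedral_iff (hp : p ≠ 0) {m : Perm X} :
    m ∈ hN.genDihedral x₀ e ↔
      ∃ a : N, a ^ p = 1 ∧ (m = a ∨ m = a * hN.reflection x₀ e) := by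
  constructor
  · rintro ⟨⟨n, g⟩, rfl⟩
    refine ⟨torsionHom e n, torsionHom_pow e n, ?_⟩
    rcases Multiplicative.eq_one_or_eq_ofAdd_one g with rfl | rfl
    · simp
    · simp
  · rintro ⟨a, ha, rfl | rfl⟩ <;> obtain ⟨n, rfl⟩ := exists_torsionHom_eq e hp ha
    · exact ⟨⟨n, 1⟩, by simp⟩
    · exact ⟨⟨n, .ofAdd 1⟩, by simp⟩

theorem mul_reflection_apply_ne (hodd : Odd p) {a : N} (ha : a ^ p = 1) (x : X) :
    ((a : Perm X) * hN.reflection x₀ e) x ≠ x := by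
  obtain ⟨b, rfl⟩ := (hN.orbitEquiv x₀).surjective x
  intro h
  change a • hN.reflection x₀ e (b • x₀) = b • x₀ at h
  rw [reflection_smul, ← mul_smul] at h
  apply mul_involution_ne_sq e hodd ha b
  simpa [pow_two, mul_assoc] using congrArg (· * b) (hN.smul_left_injective x₀ h)

theorem exists_mem_genDihedral_apply_eq (hodd : Odd p) (x : X) :
    ∃ m ∈ hN.genDihedral x₀ e, m x₀ = x := by
  obtain ⟨b, rfl⟩ := (hN.orbitEquiv x₀).surjective x
  rcases pow_eq_one_or_mul_involution_pow_eq_one e hodd b with hb | hb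
  · exact ⟨b, (hN.mem_genDihedral_iff x₀ e hodd.pos.ne').mpr ⟨b, hb, .inl rfl⟩, rfl⟩
  · refine ⟨_, (hN.mem_genDihedral_iff x₀ e hodd.pos.ne').mpr ⟨_, hb, .inr rfl⟩, ?_⟩
    have hs : hN.reflection x₀ e x₀ = involution e • x₀ := by
      simpa using hN.reflection_smul x₀ e 1
    change (b * involution e) • hN.reflection x₀ e x₀ = b • x₀
    rw [hs, ← mul_smul, mul_assoc, ← pow_two, involution_sq, mul_one]

theorem isRegularSubgroup_genDihedral (hodd : Odd p) :
    IsRegularSubgroup (hN.genDihedral x₀ e) := by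
  refine ⟨fun x y => ?_, fun m hm x hx => ?_⟩
  · obtain ⟨mx, hmx, rfl⟩ := hN.exists_mem_genDihedral_apply_eq x₀ e hodd x
    obtain ⟨my, hmy, rfl⟩ := hN.exists_mem_genDihedral_apply_eq x₀ e hodd y
    exact ⟨my * mx⁻¹, mul_mem hmy (inv_mem hmx), by simp [Perm.mul_apply]⟩
  · obtain ⟨a, ha, rfl | rfl⟩ := (hN.mem_genDihedral_iff x₀ e hodd.pos.ne').mp hm
    · exact hN.2 a a.2 x hx
    · exact absurd hx (hN.mul_reflection_apply_ne x₀ e hodd ha x)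

theorem genDihedralHom_injective (hodd : Odd p) :
    Function.Injective (hN.genDihedralHom x₀ e) := by
  refine (injective_iff_map_eq_one _).mpr fun ⟨n, g⟩ h => ?_
  rw [SemidirectProduct.mk_eq_inl_mul_inr, map_mul, genDihedralHom_inl] at h
  rcases Multiplicative.eq_one_or_eq_ofAdd_one g with rfl | rfl
  · rw [map_one, map_one, mul_one, OneMemClass.coe_eq_one] at h
    rw [torsionHom_injective e hodd.pos.ne' (h.trans (map_one _).symm)]
    rfl
  · rw [genDihedralHom_inr_ofAdd_one] at h
    exact absurd (congrArg (· x₀) h)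
      (hN.mul_reflection_apply_ne x₀ e hodd (torsionHom_pow e n) x₀)

theorem conj_reflection_eq (hodd : Odd p) (c : Subgroup.normalizer (N : Set (Perm X))) :
    ∃ b : N, b ^ p = 1 ∧
      (c : Perm X) * hN.reflection x₀ e * (c : Perm X)⁻¹ = b * hN.reflection x₀ e := by
  have : IsMulCommutative N := .of_comm (commute e)
  obtain ⟨b, hb⟩ := hN.exists_conj_invPerm_eq x₀ c.2
  refine ⟨b ^ 2, by rw [← pow_mul, pow_two_mul_eq_one e], ?_⟩
  have ht : (c : Perm X) * (involution e : N) * (c : Perm X)⁻¹ = (involution e : N) := by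
    rw [← Subgroup.normalizerMonoidHom_apply_apply_coe, map_involution e hodd]
  calc (c : Perm X) * hN.reflection x₀ e * (c : Perm X)⁻¹
      = ((c : Perm X) * (involution e : N) * (c : Perm X)⁻¹) *
          ((c : Perm X) * hN.invPerm x₀ * (c : Perm X)⁻¹) := by
        simp only [reflection]
        group
    _ = ((involution e * b ^ 2 : N) : Perm X) * hN.invPerm x₀ := by
        rw [ht, hb, ← mul_assoc, Subgroup.coe_mul]
    _ = ((b ^ 2 : N) : Perm X) * hN.reflection x₀ e := by
        rw [mul_comm' (involution e), Subgroup.coe_mul, mul_assoc]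
        rfl

theorem normalizer_le_normalizer_genDihedral (hodd : Odd p) :
    Subgroup.normalizer (N : Set (Perm X)) ≤
      Subgroup.normalizer (hN.genDihedral x₀ e : Set (Perm X)) := by
  refine Subgroup.le_normalizer_iff.mpr fun c hc m hm => ?_
  let φ := N.normalizerMonoidHom ⟨c, hc⟩
  rw [hN.mem_genDihedral_iff x₀ e hodd.pos.ne'] at hm ⊢
  obtain ⟨a, ha, rfl | rfl⟩ := hm
  · exact ⟨φ a, by rw [← map_pow, ha, map_one], .inl rfl⟩
  · obtain ⟨b, hb, hcs⟩ := hN.conj_reflection_eq x₀ e hodd ⟨c, hc⟩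
    have hab : (φ a * b) ^ p = 1 := by
      rw [(commute e _ _).mul_pow, ← map_pow, ha, map_one, hb, one_mul]
    refine ⟨φ a * b, hab, .inr ?_⟩
    calc c * (a * hN.reflection x₀ e) * c⁻¹
        = (c * a * c⁻¹) * (c * hN.reflection x₀ e * c⁻¹) := by group
      _ = ((φ a * b : N) : Perm X) * hN.reflection x₀ e := by
        rw [hcs, ← mul_assoc]
        rfl
end Construction

end IsRegularSubgroup

theorem abelian_type_implies_genDihedral_type_general (p : ℕ) (hodd : Odd p)
    (G : Type*) [Group G] (G' : Subgroup G)
    (h : ∃ N : Subgroup (Equiv.Perm (G ⧸ G')),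
        IsRegularSubgroup N ∧
        Nonempty (↥N ≃* Multiplicative (ZMod p × ZMod (2 * p))) ∧
        ∀ g : G, MulAction.toPermHom G (G ⧸ G') g ∈ Subgroup.normalizer (N : Set (Equiv.Perm (G ⧸ G')))) :
    ∃ M : Subgroup (Equiv.Perm (G ⧸ G')),
        IsRegularSubgroup M ∧
        Nonempty (↥M ≃* GenDihedral p) ∧
        ∀ g : G, MulAction.toPermHom G (G ⧸ G') g ∈ Subgroup.normalizer (M : Set (Equiv.Perm (G ⧸ G'))) := by
  obtain ⟨N, hN, ⟨e⟩, hnorm⟩ := h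
  let x₀ : G ⧸ G' := (1 : G)
  exact ⟨hN.genDihedral x₀ e, hN.isRegularSubgroup_genDihedral x₀ e hodd,
    ⟨(MonoidHom.ofInjective (hN.genDihedralHom_injective x₀ e hodd)).symm⟩,
    fun g => hN.normalizer_le_normalizer_genDihedral x₀ e hodd (hnorm g)⟩

/-- Theorem 4.1, first case: if a separable extension of degree `2 p ^ 2` (Galois data
`(G, G')`, `p` an odd prime) has a Hopf Galois structure of type `C_p × C_{2p}`, then it
has one of type `(C_p × C_p) ⋊ C_2`. -/
theorem abelian_type_implies_genDihedral_type (p : ℕ) (hp : p.Prime) (hodd : Odd p)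
    (G : Type*) [Group G] [Finite G] (G' : Subgroup G)
    (hindex : G'.index = 2 * p ^ 2)
    (h : ∃ N : Subgroup (Equiv.Perm (G ⧸ G')),
        IsRegularSubgroup N ∧
        Nonempty (↥N ≃* Multiplicative (ZMod p × ZMod (2 * p))) ∧
        ∀ g : G, MulAction.toPermHom G (G ⧸ G') g ∈ Subgroup.normalizer (N : Set (Equiv.Perm (G ⧸ G')))) :
    ∃ M : Subgroup (Equiv.Perm (G ⧸ G')),
        IsRegularSubgroup M ∧
        Nonempty (↥M ≃* GenDihedral p) ∧
        ∀ g : G, MulAction.toPermHom G (G ⧸ G') g ∈ Subgroup.normalizer (M : Set (Equiv.Perm (G ⧸ G'))) :=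
  abelian_type_implies_genDihedral_type_general p hodd G G' h
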